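/- Every scattering polynomial φ^{(p,q)} (p, q ≥ 1) lies in L²(D, dxdy/(1-x²-y²)): the integral ∫_D |φ^{(p,q)}|² (1-x²-y²)^{-1} dxdy is finite. -/

import Mathlib

open MeasureTheory Complex

/-- Wirtinger derivative ∂/∂z = (∂ₓ - i∂ᵧ)/2 -/
noncomputable def wdz (f : ℂ → ℂ) (z : ℂ) : ℂ :=
  (fderiv ℝ f z 1 - Complex.I * fderiv ℝ f z Complex.I) / 2

/-- Wirtinger derivative ∂/∂z̄ = (∂ₓ + i∂ᵧ)/2 -/
noncomputable def wdzbar (f : ℂ → ℂ) (z : ℂ) : ℂ :=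
  (fderiv ℝ f z 1 + Complex.I * fderiv ℝ f z Complex.I) / 2

/-- Scattering polynomial φ^{(p,q)} given by the Rodrigues-type formula
    φ^{(p,q)}(z) = ((-1)^p / (q (p+q-1)!)) (1 - z z̄) ∂^{p+q}/∂z^p ∂z̄^q (1 - z z̄)^{p+q-1}. -/
noncomputable def scatter (p q : ℕ) : ℂ → ℂ := fun z =>
  ((-1 : ℂ) ^ p / (q * Nat.factorial (p + q - 1))) * (1 - z * (starRingEnd ℂ) z) *
    (wdz^[p] (wdzbar^[q] (fun w => (1 - w * (starRingEnd ℂ) w) ^ (p + q - 1))) z)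
/-- The open unit disk in ℂ. -/
def unitDisk : Set ℂ := {z : ℂ | ‖z‖ < 1}

/-- The measure dxdy/(1-x²-y²) on the unit disk. -/
noncomputable def diskMeasure : Measure ℂ :=
  (volume.restrict unitDisk).withDensity fun z => ENNReal.ofReal (1 - Complex.normSq z)⁻¹

/-!
The Rodrigues formula exhibits `φ^{(p,q)}` as `1 - |z|²` times a smooth function `g`, so
`|φ^{(p,q)}|² / (1 - |z|²) = (1 - |z|²) |g|²` is bounded on the disk, which has finite area.
-/

open scoped ContDiff

theorem ContDiff.wdz {f : ℂ → ℂ} (hf : ContDiff ℝ ∞ f) : ContDiff ℝ ∞ (wdz f) := by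
  have hf' := hf.fderiv_right (m := ∞) le_rfl
  unfold _root_.wdz
  fun_prop

theorem ContDiff.wdzbar {f : ℂ → ℂ} (hf : ContDiff ℝ ∞ f) : ContDiff ℝ ∞ (wdzbar f) := by
  have hf' := hf.fderiv_right (m := ∞) le_rfl
  unfold _root_.wdzbar
  fun_prop

theorem contDiff_iterate_wdz_iterate_wdzbar {f : ℂ → ℂ} (hf : ContDiff ℝ ∞ f) (p q : ℕ) :
    ContDiff ℝ ∞ (wdz^[p] (wdzbar^[q] f)) :=
  Function.Iterate.rec (ContDiff ℝ ∞ ·)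
    (Function.Iterate.rec (ContDiff ℝ ∞ ·) hf (fun _ => ContDiff.wdzbar) q) (fun _ => ContDiff.wdz) p

theorem unitDisk_eq_ball : unitDisk = Metric.ball 0 1 := by
  ext z
  simp [unitDisk]

theorem normSq_lt_one_of_mem_unitDisk {z : ℂ} (hz : z ∈ unitDisk) : normSq z < 1 := by
  have hz' : ‖z‖ < 1 := hz
  rw [← Complex.sq_norm]
  nlinarith [norm_nonneg z]

theorem memLp_two_diskMeasure_of_continuous {g : ℂ → ℂ} (hg : Continuous g) :
    MemLp (fun z => (1 - z * (starRingEnd ℂ) z) * g z) 2 diskMeasure := by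
  have hf : Continuous fun z => (1 - z * (starRingEnd ℂ) z) * g z := by fun_prop
  have hdensity : Measurable fun z => ENNReal.ofReal (1 - normSq z)⁻¹ := by fun_prop
  rw [memLp_two_iff_integrable_sq_norm hf.aestronglyMeasurable, diskMeasure,
    integrable_withDensity_iff hdensity (ae_of_all _ fun _ => ENNReal.ofReal_lt_top)]
  obtain ⟨C, hC⟩ := (isCompact_closedBall (0 : ℂ) 1).exists_bound_of_continuousOn hg.continuousOn
  refine Measure.integrableOn_of_bounded (M := C ^ 2)
    (by rw [unitDisk_eq_ball]; exact measure_ball_lt_top.ne)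
    ((hf.norm.pow 2).aestronglyMeasurable.mul hdensity.ennreal_toReal.aestronglyMeasurable) ?_
  rw [ae_restrict_iff' (unitDisk_eq_ball ▸ measurableSet_ball)]
  refine ae_of_all _ fun z hz => ?_
  set t := 1 - normSq z
  have ht : 0 < t := sub_pos.2 (normSq_lt_one_of_mem_unitDisk hz)
  have ht1 : t ≤ 1 := sub_le_self _ (normSq_nonneg z)
  have hgz : ‖g z‖ ≤ C := hC z (Metric.ball_subset_closedBall (unitDisk_eq_ball ▸ hz))
  have hnorm : ‖(1 - z * (starRingEnd ℂ) z) * g z‖ = t * ‖g z‖ := by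
    rw [norm_mul, mul_conj, ← ofReal_one, ← ofReal_sub, norm_real, Real.norm_of_nonneg ht.le]
  rw [ENNReal.toReal_ofReal (inv_nonneg.2 ht.le), hnorm]
  calc ‖(t * ‖g z‖) ^ 2 * t⁻¹‖ = t * ‖g z‖ ^ 2 := by
        rw [Real.norm_of_nonneg (by positivity)]; field_simp
    _ ≤ 1 * C ^ 2 := by gcongr
    _ = C ^ 2 := one_mul _

theorem scatter_eq_one_sub_mul_conj_mul (p q : ℕ) :
    scatter p q = fun z => (1 - z * (starRingEnd ℂ) z) *
    ((-1 : ℂ) ^ p / (q * Nat.factorial (p + q - 1)) *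
      wdz^[p] (wdzbar^[q] (fun w => (1 - w * (starRingEnd ℂ) w) ^ (p + q - 1))) z) := by
  ext z
  simp only [scatter]
  ring

theorem scatter_memL2_general (p q : ℕ) :
    MemLp (scatter p q) 2 diskMeasure := by
  have hbase : ContDiff ℝ ∞ fun w : ℂ => (1 - w * (starRingEnd ℂ) w) ^ (p + q - 1) :=
    (contDiff_const.sub (contDiff_id.mul conjCLE.contDiff)).pow _
  rw [scatter_eq_one_sub_mul_conj_mul]
  exact memLp_two_diskMeasure_of_continuous
    (continuous_const.mul (contDiff_iterate_wdz_iterate_wdzbar hbase p q).continuous)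

/-- Every scattering polynomial is square integrable with respect to dxdy/(1-x²-y²) on D. -/
theorem scatter_memL2 (p q : ℕ) (hp : 1 ≤ p) (hq : 1 ≤ q) :
    MemLp (scatter p q) 2 diskMeasure :=
  scatter_memL2_general p q
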